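/- Let α, α₁, α₂ ∈ ℝ with α ≠ 0 and α·α₂ < 0. For i, j ∈ ℕ and t ∈ ℝ define I_{i,j}(t) = ∫₀^∞ ∫₀^∞ (x^i y^j e^{(i+j)αt} / ((x+y) e^{αt})) · exp((α₁/α)(x + y) e^{αt} + (α₂/(2α))(x² + y²) e^{2αt}) dx dy and β_i(t) = ∫₀^∞ x^i e^{iαt} exp((α₁/α) x e^{αt} + (α₂/(2α)) x² e^{2αt}) dx. Then all integrals converge, all functions are differentiable on ℝ, and for all i, j ∈ ℕ and t ∈ ℝ: I_{i,j}'(t) = α(i+j−1) I_{i,j}(t) + α₁(I_{i+1,j}(t) + I_{i,j+1}(t)) + α₂(I_{i+2,j}(t) + I_{i,j+2}(t)), β_i'(t) = iα β_i(t) + α₁ β_{i+1}(t) + α₂ β_{i+2}(t), I_{i,j}'(t) = −2α I_{i,j}(t), and β_i'(t) = −α β_i(t). -/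

import Mathlib

/-!
Both moment integrands have the form `P(p) e^{kαt} exp(a L(p) e^{αt} + c Q(p) e^{2αt})` with
`P, L, Q` positively homogeneous of degrees `k, 1, 2` (`gaussFamily`): `k = i` for `β_i`, and
`k = i + j - 1` for `I_{i,j}` because of the kernel `1/(x+y)`. Homogeneity makes the integrand a
function of `e^{αt} p`, so the substitution `p ↦ e^{-αt} p` on the cone `(0,∞)ⁿ` gives
`β_i(t) = e^{-αt} β_i(0)` and `I_{i,j}(t) = e^{-2αt} I_{i,j}(0)`.

For the evolution equations we differentiate under the integral sign: `∂ₜ` multiplies the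
integrand by `kα + α₁ L e^{αt} + α₂ Q e^{2αt}`, which raises the indices. As `c = α₂/(2α) < 0`,
for `t` in a bounded interval everything is dominated by a polynomial times `exp(b L + c' Q)` with
`c' < 0`; on the quadrant, `1/(x+y) ≤ 1/√(xy)` splits this majorant into a product of integrable
functions of one variable.
-/

open MeasureTheory

/-- The deformed bimoments of symmetric Cauchy biorthogonal polynomials:
`I_{i,j}(t) = ∬_{(0,∞)²} (x^i y^j e^{(i+j)αt} / ((x+y) e^{αt}))
  exp((α₁/α)(x+y)e^{αt} + (α₂/(2α))(x²+y²)e^{2αt}) dx dy`. -/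
noncomputable def cauchyBimoment (α α₁ α₂ : ℝ) (i j : ℕ) (t : ℝ) : ℝ :=
  ∫ p in (Set.Ioi (0 : ℝ)) ×ˢ (Set.Ioi (0 : ℝ)),
    p.1 ^ i * p.2 ^ j * Real.exp (((i : ℝ) + (j : ℝ)) * α * t)
      / ((p.1 + p.2) * Real.exp (α * t))
      * Real.exp (α₁ / α * (p.1 + p.2) * Real.exp (α * t)
          + α₂ / (2 * α) * (p.1 ^ 2 + p.2 ^ 2) * Real.exp (2 * α * t))

/-- The deformed single moments:
`β_i(t) = ∫₀^∞ x^i e^{iαt} exp((α₁/α) x e^{αt} + (α₂/(2α)) x² e^{2αt}) dx`. -/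
noncomputable def cauchySingleMoment (α α₁ α₂ : ℝ) (i : ℕ) (t : ℝ) : ℝ :=
  ∫ x in Set.Ioi (0 : ℝ),
    x ^ i * Real.exp ((i : ℝ) * α * t) *
      Real.exp (α₁ / α * x * Real.exp (α * t) + α₂ / (2 * α) * x ^ 2 * Real.exp (2 * α * t))

open MeasureTheory Set Real Module Filter

theorem integrableOn_rpow_mul_exp_quadratic {s : ℝ} (hs : -1 < s) (b : ℝ) {c : ℝ} (hc : c < 0) :
    IntegrableOn (fun x : ℝ => x ^ s * exp (b * x + c * x ^ 2)) (Ioi 0) := by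
  -- complete the square, keeping half of the Gaussian decay
  have hsq : ∀ x : ℝ, b * x + c * x ^ 2 ≤ b ^ 2 / (-(2 * c)) + -(-c / 2) * x ^ 2 := by
    intro x
    have : b * x + c / 2 * x ^ 2 ≤ b ^ 2 / (-(2 * c)) := by
      rw [le_div_iff₀ (by linarith)]
      nlinarith [sq_nonneg (b + c * x)]
    linarith
  refine ((integrableOn_rpow_mul_exp_neg_mul_sq (by linarith : 0 < -c / 2) hs).const_mul
    (exp (b ^ 2 / (-(2 * c))))).mono' (by fun_prop : Measurable _).aestronglyMeasurable ?_
  filter_upwards [ae_restrict_mem measurableSet_Ioi] with x (hx : 0 < x)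
  rw [norm_of_nonneg (by positivity), mul_left_comm, ← exp_add]
  exact mul_le_mul_of_nonneg_left (exp_le_exp.2 (hsq x)) (by positivity)

theorem integrableOn_rpow_mul_one_add_add_sq_mul_exp_quadratic {s : ℝ} (hs : -1 < s) (b : ℝ)
    {c : ℝ} (hc : c < 0) :
    IntegrableOn (fun x : ℝ => x ^ s * (1 + x + x ^ 2) * exp (b * x + c * x ^ 2)) (Ioi 0) := by
  have h := ((integrableOn_rpow_mul_exp_quadratic hs b hc).add
    (integrableOn_rpow_mul_exp_quadratic (s := s + 1) (by linarith) b hc)).add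
    (integrableOn_rpow_mul_exp_quadratic (s := s + 2) (by linarith) b hc)
  refine h.congr_fun (fun x (hx : 0 < x) => ?_) measurableSet_Ioi
  simp only [Pi.add_apply, rpow_add hx, rpow_one, rpow_two]
  ring

noncomputable def gaussFamily {X : Type*} (P L Q : X → ℝ) (α k a c u : ℝ) (p : X) : ℝ :=
  P p * exp (k * α * u) * exp (a * L p * exp (α * u) + c * Q p * exp (2 * α * u))

section GaussFamily

variable {X : Type*} {P L Q : X → ℝ} {α k a c : ℝ}

theorem hasDerivAt_gaussFamily (p : X) (u : ℝ) :
    HasDerivAt (gaussFamily P L Q α k a c · p)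
      ((k * α + a * α * L p * exp (α * u) + 2 * c * α * Q p * exp (2 * α * u)) *
        gaussFamily P L Q α k a c u p) u := by
  have hlin : ∀ r : ℝ, HasDerivAt (fun v => r * v) r u := fun r => by
    simpa using (hasDerivAt_id u).const_mul r
  have hW : HasDerivAt (fun v => a * L p * exp (α * v) + c * Q p * exp (2 * α * v))
      (a * L p * (exp (α * u) * α) + c * Q p * (exp (2 * α * u) * (2 * α))) u :=
    ((hlin α).exp.const_mul _).add ((hlin (2 * α)).exp.const_mul _)
  refine (((hlin (k * α)).exp.const_mul (P p)).mul hW.exp).congr_deriv ?_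
  simp only [gaussFamily]
  ring

theorem abs_gaussFamily_le {R u : ℝ} {p : X} (hc : c ≤ 0) (hP : 0 ≤ P p) (hL : 0 ≤ L p)
    (hQ : 0 ≤ Q p) (hu : |α * u| ≤ R) :
    |gaussFamily P L Q α k a c u p| ≤
      exp (|k| * R) * (P p * exp (|a| * exp R * L p + c * exp (-(2 * R)) * Q p)) := by
  obtain ⟨hu₁, hu₂⟩ := abs_le.1 hu
  have hk : k * α * u ≤ |k| * R :=
    calc k * α * u = k * (α * u) := by ring
      _ ≤ |k * (α * u)| := le_abs_self _
      _ ≤ |k| * R := by rw [abs_mul]; gcongr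
  have ha : a * L p * exp (α * u) ≤ |a| * exp R * L p :=
    calc a * L p * exp (α * u) ≤ |a| * L p * exp R := by gcongr; exact le_abs_self a
      _ = |a| * exp R * L p := by ring
  have hc' : c * Q p * exp (2 * α * u) ≤ c * Q p * exp (-(2 * R)) :=
    mul_le_mul_of_nonpos_left (exp_le_exp.2 (by linarith)) (mul_nonpos_of_nonpos_of_nonneg hc hQ)
  rw [abs_of_nonneg (by unfold gaussFamily; positivity)]
  calc gaussFamily P L Q α k a c u p
      ≤ P p * exp (|k| * R) * exp (|a| * exp R * L p + c * exp (-(2 * R)) * Q p) := by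
        unfold gaussFamily
        exact mul_le_mul (mul_le_mul_of_nonneg_left (exp_le_exp.2 hk) hP)
          (exp_le_exp.2 (by linarith)) (exp_nonneg _) (by positivity)
    _ = _ := by ring

theorem abs_gaussFamily_rate_le {R u : ℝ} {p : X} (hL : 0 ≤ L p) (hQ : 0 ≤ Q p)
    (hu : |α * u| ≤ R) :
    |k * α + a * α * L p * exp (α * u) + 2 * c * α * Q p * exp (2 * α * u)| ≤
      (|k * α| + |a * α| * exp R + |2 * c * α| * exp (2 * R)) * (1 + L p + Q p) := by
  have hR := (abs_le.1 hu).2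
  have hL' : |a * α * L p * exp (α * u)| = |a * α| * L p * exp (α * u) := by
    rw [abs_mul, abs_mul, abs_of_nonneg hL, abs_exp]
  have hQ' : |2 * c * α * Q p * exp (2 * α * u)| = |2 * c * α| * Q p * exp (2 * α * u) := by
    rw [abs_mul, abs_mul, abs_of_nonneg hQ, abs_exp]
  have hrest : 0 ≤ |k * α| * (L p + Q p) + |a * α| * exp R * (1 + Q p) +
      |2 * c * α| * exp (2 * R) * (1 + L p) := by positivity
  calc _ ≤ |k * α| + |a * α * L p * exp (α * u)| + |2 * c * α * Q p * exp (2 * α * u)| :=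
        abs_add_three _ _ _
    _ ≤ |k * α| + |a * α| * L p * exp R + |2 * c * α| * Q p * exp (2 * R) := by
        rw [hL', hQ']
        gcongr _ + _ * exp ?_ + _ * exp ?_
        all_goals linarith
    _ ≤ _ := by nlinarith

variable [MeasurableSpace X] {μ : Measure X}

/-- What is needed to differentiate `t ↦ ∫ gaussFamily P L Q α k a c t ∂μ` under the integral
sign when `c < 0`. -/
structure HasGaussianMoments (μ : Measure X) (P L Q : X → ℝ) : Prop where
  measurable_prefactor : Measurable P
  measurable_linear : Measurable L
  measurable_quadratic : Measurable Q
  nonneg : ∀ᵐ p ∂μ, 0 ≤ P p ∧ 0 ≤ L p ∧ 0 ≤ Q p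
  integrable : ∀ b c, c < 0 →
    Integrable (fun p => P p * (1 + L p + Q p) * exp (b * L p + c * Q p)) μ

theorem HasGaussianMoments.integrable_gaussFamily (h : HasGaussianMoments μ P L Q) (hc : c < 0)
    (u : ℝ) : Integrable (gaussFamily P L Q α k a c u) μ := by
  obtain ⟨hP, hL, hQ, hnonneg, hint⟩ := h
  refine ((hint (|a| * exp |α * u|) (c * exp (-(2 * |α * u|)))
    (mul_neg_of_neg_of_pos hc (exp_pos _))).const_mul (exp (|k| * |α * u|))).mono'
    (by unfold gaussFamily; fun_prop : Measurable _).aestronglyMeasurable ?_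
  filter_upwards [hnonneg] with p ⟨hPp, hLp, hQp⟩
  rw [norm_eq_abs]
  refine (abs_gaussFamily_le hc.le hPp hLp hQp le_rfl).trans
    (mul_le_mul_of_nonneg_left ?_ (exp_nonneg _))
  exact mul_le_mul_of_nonneg_right (le_mul_of_one_le_right hPp (by linarith)) (exp_nonneg _)

theorem HasGaussianMoments.hasDerivAt_integral_gaussFamily (h : HasGaussianMoments μ P L Q)
    (hc : c < 0) (t : ℝ) :
    HasDerivAt (fun u => ∫ p, gaussFamily P L Q α k a c u p ∂μ)
      (∫ p, (k * α + a * α * L p * exp (α * t) + 2 * c * α * Q p * exp (2 * α * t)) *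
        gaussFamily P L Q α k a c t p ∂μ) t := by
  have hF := h.integrable_gaussFamily (α := α) (k := k) (a := a) hc t
  obtain ⟨hP, hL, hQ, hnonneg, hint⟩ := h
  set R := |α| * (|t| + 1)
  have hR : ∀ u ∈ Metric.ball t 1, |α * u| ≤ R := by
    intro u hu
    rw [Metric.mem_ball, dist_eq] at hu
    rw [abs_mul]
    exact mul_le_mul_of_nonneg_left (by linarith [abs_sub_abs_le_abs_sub u t]) (abs_nonneg α)
  have hmeas : ∀ u, Measurable (gaussFamily P L Q α k a c u) := fun u => by
    unfold gaussFamily; fun_prop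
  have hFt := hmeas t
  refine (hasDerivAt_integral_of_dominated_loc_of_deriv_le (Metric.ball_mem_nhds t one_pos)
    (Eventually.of_forall fun u => (hmeas u).aestronglyMeasurable) hF
    (by fun_prop : Measurable _).aestronglyMeasurable ?_
    ((hint (|a| * exp R) (c * exp (-(2 * R))) (mul_neg_of_neg_of_pos hc (exp_pos _))).const_mul
      ((|k * α| + |a * α| * exp R + |2 * c * α| * exp (2 * R)) * exp (|k| * R)))
    (Eventually.of_forall fun p u _ => hasDerivAt_gaussFamily p u)).2
  filter_upwards [hnonneg] with p ⟨hPp, hLp, hQp⟩ u hu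
  rw [norm_mul, norm_eq_abs, norm_eq_abs]
  calc _ ≤ (|k * α| + |a * α| * exp R + |2 * c * α| * exp (2 * R)) * (1 + L p + Q p) *
        (exp (|k| * R) * (P p * exp (|a| * exp R * L p + c * exp (-(2 * R)) * Q p))) :=
        mul_le_mul (abs_gaussFamily_rate_le hLp hQp (hR u hu))
          (abs_gaussFamily_le hc.le hPp hLp hQp (hR u hu)) (abs_nonneg _) (by positivity)
    _ = _ := by ring

end GaussFamily

section Homogeneous

open scoped Pointwise

variable {E : Type*} [NormedAddCommGroup E] [NormedSpace ℝ E] {P L Q : E → ℝ} {α k a c : ℝ}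

theorem gaussFamily_eq_comp_smul (hP : ∀ r : ℝ, 0 < r → ∀ p, P (r • p) = r ^ k * P p)
    (hL : ∀ r : ℝ, 0 < r → ∀ p, L (r • p) = r * L p)
    (hQ : ∀ r : ℝ, 0 < r → ∀ p, Q (r • p) = r ^ 2 * Q p) (u : ℝ) (p : E) :
    gaussFamily P L Q α k a c u p = gaussFamily P L Q α k a c 0 (exp (α * u) • p) := by
  simp only [gaussFamily, hP _ (exp_pos _), hL _ (exp_pos _), hQ _ (exp_pos _), mul_zero,
    exp_zero, mul_one, ← exp_mul, ← exp_nat_mul]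
  push_cast
  ring_nf

variable [MeasurableSpace E] [BorelSpace E] [FiniteDimensional ℝ E] (μ : Measure E)
  [μ.IsAddHaarMeasure]

theorem hasDerivAt_setIntegral_gaussFamily_of_homogeneous {s : Set E}
    (hs : ∀ r : ℝ, 0 < r → r • s = s) (hP : ∀ r : ℝ, 0 < r → ∀ p, P (r • p) = r ^ k * P p)
    (hL : ∀ r : ℝ, 0 < r → ∀ p, L (r • p) = r * L p)
    (hQ : ∀ r : ℝ, 0 < r → ∀ p, Q (r • p) = r ^ 2 * Q p) (t : ℝ) :
    HasDerivAt (fun u => ∫ p in s, gaussFamily P L Q α k a c u p ∂μ)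
      (-(finrank ℝ E * α) * ∫ p in s, gaussFamily P L Q α k a c t p ∂μ) t := by
  have hscale : ∀ u, ∫ p in s, gaussFamily P L Q α k a c u p ∂μ =
      exp (-(finrank ℝ E * α) * u) * ∫ p in s, gaussFamily P L Q α k a c 0 p ∂μ := by
    intro u
    rw [integral_congr_ae (ae_of_all _ (gaussFamily_eq_comp_smul hP hL hQ u)),
      Measure.setIntegral_comp_smul_of_pos μ _ s (exp_pos _), hs _ (exp_pos _), smul_eq_mul,
      ← exp_nat_mul, ← exp_neg]
    ring_nf
  rw [funext hscale, hscale t]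
  exact (((hasDerivAt_id' t).const_mul _).exp.mul_const _).congr_deriv (by ring)

end Homogeneous

theorem div_two_mul_neg_of_mul_neg {α α₂ : ℝ} (h : α * α₂ < 0) : α₂ / (2 * α) < 0 := by
  rcases mul_neg_iff.1 h with ⟨hα, hα₂⟩ | ⟨hα, hα₂⟩
  · exact div_neg_of_neg_of_pos hα₂ (by linarith)
  · exact div_neg_of_pos_of_neg hα₂ (by linarith)

theorem pow_mul_pow_div_add_le {x y : ℝ} (hx : 0 < x) (hy : 0 < y) (i j : ℕ) :
    x ^ i * y ^ j / (x + y) ≤ x ^ ((i : ℝ) - 1 / 2) * y ^ ((j : ℝ) - 1 / 2) := by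
  have hsqrt : √x * √y ≤ x + y := by
    nlinarith [sq_nonneg (√x - √y), sq_sqrt hx.le, sq_sqrt hy.le, sqrt_nonneg x, sqrt_nonneg y]
  rw [rpow_sub hx, rpow_sub hy, rpow_natCast, rpow_natCast, ← sqrt_eq_rpow, ← sqrt_eq_rpow,
    div_mul_div_comm]
  exact div_le_div_of_nonneg_left (by positivity) (by positivity) hsqrt

theorem hasGaussianMoments_pow (i : ℕ) :
    HasGaussianMoments (volume.restrict (Ioi 0)) (· ^ i) id (· ^ 2) where
  measurable_prefactor := by fun_prop
  measurable_linear := measurable_id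
  measurable_quadratic := by fun_prop
  nonneg := ae_restrict_of_forall_mem measurableSet_Ioi fun x (hx : 0 < x) =>
    ⟨by positivity, hx.le, by positivity⟩
  integrable b c hc := by
    refine (integrableOn_rpow_mul_one_add_add_sq_mul_exp_quadratic (s := i)
      (by linarith [i.cast_nonneg (α := ℝ)]) b hc).congr_fun (fun x _ => ?_) measurableSet_Ioi
    simp only [rpow_natCast, id]

theorem hasGaussianMoments_cauchyKernel (i j : ℕ) :
    HasGaussianMoments (volume.restrict (Ioi (0 : ℝ) ×ˢ Ioi (0 : ℝ)))
      (fun p => p.1 ^ i * p.2 ^ j / (p.1 + p.2)) (fun p => p.1 + p.2)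
      (fun p => p.1 ^ 2 + p.2 ^ 2) where
  measurable_prefactor := by fun_prop
  measurable_linear := by fun_prop
  measurable_quadratic := by fun_prop
  nonneg := ae_restrict_of_forall_mem (measurableSet_Ioi.prod measurableSet_Ioi)
    fun p ⟨(hx : 0 < p.1), (hy : 0 < p.2)⟩ => ⟨by positivity, by positivity, by positivity⟩
  integrable b c hc := by
    set g : ℕ → ℝ → ℝ := fun n x => x ^ ((n : ℝ) - 1 / 2) * (1 + x + x ^ 2) *
      exp (b * x + c * x ^ 2)
    have hg : ∀ n : ℕ, IntegrableOn (g n) (Ioi 0) := fun n =>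
      integrableOn_rpow_mul_one_add_add_sq_mul_exp_quadratic
        (by linarith [n.cast_nonneg (α := ℝ)]) b hc
    have hprod : IntegrableOn (fun p : ℝ × ℝ => g i p.1 * g j p.2) (Ioi 0 ×ˢ Ioi 0) := by
      rw [IntegrableOn, Measure.volume_eq_prod, ← Measure.prod_restrict]
      exact (hg i).mul_prod (hg j)
    refine hprod.mono' (by fun_prop : Measurable _).aestronglyMeasurable ?_
    filter_upwards [ae_restrict_mem (measurableSet_Ioi.prod measurableSet_Ioi)]
      with ⟨x, y⟩ ⟨(hx : 0 < x), (hy : 0 < y)⟩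
    have hexp : exp (b * (x + y) + c * (x ^ 2 + y ^ 2)) =
        exp (b * x + c * x ^ 2) * exp (b * y + c * y ^ 2) := by
      rw [← exp_add]; ring_nf
    have hpoly : 1 + (x + y) + (x ^ 2 + y ^ 2) ≤ (1 + x + x ^ 2) * (1 + y + y ^ 2) := by
      nlinarith [mul_pos hx hy, mul_pos (mul_pos hx hy) hx, mul_pos (mul_pos hx hy) hy,
        mul_pos (mul_pos hx hy) (mul_pos hx hy)]
    rw [norm_of_nonneg (by positivity), hexp]
    calc _ ≤ x ^ ((i : ℝ) - 1 / 2) * y ^ ((j : ℝ) - 1 / 2) *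
          ((1 + x + x ^ 2) * (1 + y + y ^ 2)) *
          (exp (b * x + c * x ^ 2) * exp (b * y + c * y ^ 2)) := by
          gcongr
          exact pow_mul_pow_div_add_le hx hy i j
      _ = g i x * g j y := by simp only [g]; ring

section CauchyMoments

noncomputable def singleMomentIntegrand (α α₁ α₂ : ℝ) (i : ℕ) : ℝ → ℝ → ℝ :=
  gaussFamily (· ^ i) id (· ^ 2) α i (α₁ / α) (α₂ / (2 * α))

noncomputable def bimomentIntegrand (α α₁ α₂ : ℝ) (i j : ℕ) : ℝ → ℝ × ℝ → ℝ :=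
  gaussFamily (fun p => p.1 ^ i * p.2 ^ j / (p.1 + p.2)) (fun p => p.1 + p.2)
    (fun p => p.1 ^ 2 + p.2 ^ 2) α ((i : ℝ) + j - 1) (α₁ / α) (α₂ / (2 * α))

variable {α α₁ α₂ : ℝ}

theorem cauchyBimoment_integrand_eq (i j : ℕ) (t : ℝ) :
    (fun p : ℝ × ℝ => p.1 ^ i * p.2 ^ j * exp (((i : ℝ) + (j : ℝ)) * α * t)
      / ((p.1 + p.2) * exp (α * t))
      * exp (α₁ / α * (p.1 + p.2) * exp (α * t)
          + α₂ / (2 * α) * (p.1 ^ 2 + p.2 ^ 2) * exp (2 * α * t))) =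
      bimomentIntegrand α α₁ α₂ i j t := by
  funext p
  rw [bimomentIntegrand, gaussFamily, mul_div_mul_comm, ← exp_sub]
  ring_nf

theorem cauchyBimoment_eq (i j : ℕ) (t : ℝ) :
    cauchyBimoment α α₁ α₂ i j t =
      ∫ p in Ioi 0 ×ˢ Ioi 0, bimomentIntegrand α α₁ α₂ i j t p := by
  rw [cauchyBimoment, cauchyBimoment_integrand_eq]

theorem mul_singleMomentIntegrand (i : ℕ) (t x : ℝ) :
    x * exp (α * t) * singleMomentIntegrand α α₁ α₂ i t x =
      singleMomentIntegrand α α₁ α₂ (i + 1) t x := by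
  simp only [singleMomentIntegrand, gaussFamily, id]
  push_cast
  rw [show ((i : ℝ) + 1) * α * t = (i : ℝ) * α * t + α * t by ring, exp_add ((i : ℝ) * α * t)]
  ring

theorem fst_mul_bimomentIntegrand (i j : ℕ) (t : ℝ) (p : ℝ × ℝ) :
    p.1 * exp (α * t) * bimomentIntegrand α α₁ α₂ i j t p =
      bimomentIntegrand α α₁ α₂ (i + 1) j t p := by
  simp only [bimomentIntegrand, gaussFamily]
  push_cast
  rw [show ((i : ℝ) + 1 + j - 1) * α * t = ((i : ℝ) + j - 1) * α * t + α * t by ring,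
    exp_add (((i : ℝ) + j - 1) * α * t)]
  ring

theorem snd_mul_bimomentIntegrand (i j : ℕ) (t : ℝ) (p : ℝ × ℝ) :
    p.2 * exp (α * t) * bimomentIntegrand α α₁ α₂ i j t p =
      bimomentIntegrand α α₁ α₂ i (j + 1) t p := by
  simp only [bimomentIntegrand, gaussFamily]
  push_cast
  rw [show ((i : ℝ) + (j + 1) - 1) * α * t = ((i : ℝ) + j - 1) * α * t + α * t by ring,
    exp_add (((i : ℝ) + j - 1) * α * t)]
  ring

theorem integrableOn_singleMomentIntegrand (h : α * α₂ < 0) (i : ℕ) (t : ℝ) :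
    IntegrableOn (singleMomentIntegrand α α₁ α₂ i t) (Ioi 0) :=
  (hasGaussianMoments_pow i).integrable_gaussFamily (div_two_mul_neg_of_mul_neg h) t

theorem integrableOn_bimomentIntegrand (h : α * α₂ < 0) (i j : ℕ) (t : ℝ) :
    IntegrableOn (bimomentIntegrand α α₁ α₂ i j t) (Ioi 0 ×ˢ Ioi 0) :=
  (hasGaussianMoments_cauchyKernel i j).integrable_gaussFamily (div_two_mul_neg_of_mul_neg h) t

theorem hasDerivAt_cauchySingleMoment (h : α * α₂ < 0) (i : ℕ) (t : ℝ) :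
    HasDerivAt (fun u => cauchySingleMoment α α₁ α₂ i u)
      ((i : ℝ) * α * cauchySingleMoment α α₁ α₂ i t
        + α₁ * cauchySingleMoment α α₁ α₂ (i + 1) t
        + α₂ * cauchySingleMoment α α₁ α₂ (i + 2) t) t := by
  have hα : α ≠ 0 := by rintro rfl; simp at h
  have hS := integrableOn_singleMomentIntegrand (α₁ := α₁) h
  have hsplit : ∀ x, ((i : ℝ) * α + α₁ / α * α * id x * exp (α * t) +
      2 * (α₂ / (2 * α)) * α * x ^ 2 * exp (2 * α * t)) * singleMomentIntegrand α α₁ α₂ i t x =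
      (i : ℝ) * α * singleMomentIntegrand α α₁ α₂ i t x
        + α₁ * singleMomentIntegrand α α₁ α₂ (i + 1) t x
        + α₂ * singleMomentIntegrand α α₁ α₂ (i + 2) t x := by
    intro x
    rw [← mul_singleMomentIntegrand, ← mul_singleMomentIntegrand (i + 1),
      ← mul_singleMomentIntegrand i, div_mul_cancel₀ _ hα,
      show 2 * (α₂ / (2 * α)) * α = α₂ by field_simp,
      show 2 * α * t = α * t + α * t by ring, exp_add]
    simp only [id]
    ring
  refine ((hasGaussianMoments_pow i).hasDerivAt_integral_gaussFamily
    (div_two_mul_neg_of_mul_neg h) t).congr_deriv ((integral_congr_ae (ae_of_all _ hsplit)).trans ?_)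
  have h₀ : Integrable (singleMomentIntegrand α α₁ α₂ i t) (volume.restrict (Ioi 0)) := hS i t
  have h₁ : Integrable (singleMomentIntegrand α α₁ α₂ (i + 1) t) (volume.restrict (Ioi 0)) :=
    hS (i + 1) t
  have h₂ : Integrable (singleMomentIntegrand α α₁ α₂ (i + 2) t) (volume.restrict (Ioi 0)) :=
    hS (i + 2) t
  rw [integral_add (by fun_prop) (by fun_prop), integral_add (by fun_prop) (by fun_prop),
    integral_const_mul, integral_const_mul, integral_const_mul]
  rfl

theorem hasDerivAt_cauchyBimoment (h : α * α₂ < 0) (i j : ℕ) (t : ℝ) :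
    HasDerivAt (fun u => cauchyBimoment α α₁ α₂ i j u)
      (α * ((i : ℝ) + (j : ℝ) - 1) * cauchyBimoment α α₁ α₂ i j t
        + α₁ * (cauchyBimoment α α₁ α₂ (i + 1) j t + cauchyBimoment α α₁ α₂ i (j + 1) t)
        + α₂ * (cauchyBimoment α α₁ α₂ (i + 2) j t + cauchyBimoment α α₁ α₂ i (j + 2) t)) t := by
  have hα : α ≠ 0 := by rintro rfl; simp at h
  have hB := integrableOn_bimomentIntegrand (α₁ := α₁) h
  set μ := volume.restrict (Ioi (0 : ℝ) ×ˢ Ioi (0 : ℝ))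
  have hsplit : ∀ p : ℝ × ℝ, (((i : ℝ) + j - 1) * α + α₁ / α * α * (p.1 + p.2) * exp (α * t) +
      2 * (α₂ / (2 * α)) * α * (p.1 ^ 2 + p.2 ^ 2) * exp (2 * α * t)) *
        bimomentIntegrand α α₁ α₂ i j t p =
      α * ((i : ℝ) + j - 1) * bimomentIntegrand α α₁ α₂ i j t p
        + α₁ * (bimomentIntegrand α α₁ α₂ (i + 1) j t p + bimomentIntegrand α α₁ α₂ i (j + 1) t p)
        + α₂ * (bimomentIntegrand α α₁ α₂ (i + 2) j t p
          + bimomentIntegrand α α₁ α₂ i (j + 2) t p) := by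
    intro p
    rw [← fst_mul_bimomentIntegrand, ← fst_mul_bimomentIntegrand (i + 1),
      ← fst_mul_bimomentIntegrand i, ← snd_mul_bimomentIntegrand,
      ← snd_mul_bimomentIntegrand i (j + 1), ← snd_mul_bimomentIntegrand i j,
      div_mul_cancel₀ _ hα, show 2 * (α₂ / (2 * α)) * α = α₂ by field_simp,
      show 2 * α * t = α * t + α * t by ring, exp_add]
    ring
  simp only [cauchyBimoment_eq]
  refine ((hasGaussianMoments_cauchyKernel i j).hasDerivAt_integral_gaussFamily
    (div_two_mul_neg_of_mul_neg h) t).congr_deriv ((integral_congr_ae (ae_of_all _ hsplit)).trans ?_)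
  have h₀ : Integrable (bimomentIntegrand α α₁ α₂ i j t) μ := hB i j t
  have h₁ : Integrable (bimomentIntegrand α α₁ α₂ (i + 1) j t) μ := hB (i + 1) j t
  have h₂ : Integrable (bimomentIntegrand α α₁ α₂ i (j + 1) t) μ := hB i (j + 1) t
  have h₃ : Integrable (bimomentIntegrand α α₁ α₂ (i + 2) j t) μ := hB (i + 2) j t
  have h₄ : Integrable (bimomentIntegrand α α₁ α₂ i (j + 2) t) μ := hB i (j + 2) t
  rw [integral_add (by fun_prop) (by fun_prop), integral_add (by fun_prop) (by fun_prop),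
    integral_const_mul, integral_const_mul, integral_const_mul, integral_add h₁ h₂,
    integral_add h₃ h₄]

theorem hasDerivAt_cauchySingleMoment_neg_mul (i : ℕ) (t : ℝ) :
    HasDerivAt (fun u => cauchySingleMoment α α₁ α₂ i u)
      (-α * cauchySingleMoment α α₁ α₂ i t) t := by
  have := hasDerivAt_setIntegral_gaussFamily_of_homogeneous (volume : Measure ℝ) (k := i)
    (P := (· ^ i)) (L := id) (Q := (· ^ 2))
    (a := α₁ / α) (c := α₂ / (2 * α)) (α := α) (s := Ioi 0)
    (fun r hr => (LinearOrderedField.smul_Ioi hr).trans (by rw [mul_zero]))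
    (fun r _ x => by simp only [smul_eq_mul, mul_pow, rpow_natCast])
    (fun r _ x => rfl) (fun r _ x => by simp only [smul_eq_mul, mul_pow]) t
  rw [finrank_self, Nat.cast_one, one_mul] at this
  exact this

theorem hasDerivAt_cauchyBimoment_neg_two_mul (i j : ℕ) (t : ℝ) :
    HasDerivAt (fun u => cauchyBimoment α α₁ α₂ i j u)
      (-2 * α * cauchyBimoment α α₁ α₂ i j t) t := by
  simp only [cauchyBimoment_eq]
  have := hasDerivAt_setIntegral_gaussFamily_of_homogeneous volume (k := (i : ℝ) + j - 1)
    (a := α₁ / α) (c := α₂ / (2 * α)) (α := α) (s := Ioi (0 : ℝ) ×ˢ Ioi (0 : ℝ))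
    (P := fun p => p.1 ^ i * p.2 ^ j / (p.1 + p.2)) (L := fun p => p.1 + p.2)
    (Q := fun p => p.1 ^ 2 + p.2 ^ 2)
    (fun r hr => (smul_set_prod r _ _).trans
      (by rw [LinearOrderedField.smul_Ioi hr, mul_zero]))
    (fun r hr p => by
      simp only [Prod.smul_fst, Prod.smul_snd, smul_eq_mul]
      rw [← mul_add r p.1 p.2, div_eq_mul_inv, mul_inv, rpow_sub hr, rpow_add hr, rpow_natCast,
        rpow_natCast, rpow_one]
      ring)
    (fun r _ p => by simp only [Prod.smul_fst, Prod.smul_snd, smul_eq_mul]; ring)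
    (fun r _ p => by simp only [Prod.smul_fst, Prod.smul_snd, smul_eq_mul]; ring) t
  rw [show finrank ℝ (ℝ × ℝ) = 2 by simp, Nat.cast_ofNat, ← neg_mul] at this
  exact this

end CauchyMoments

theorem cauchyMoments_evolution_general (α α₁ α₂ : ℝ) (hαα₂ : α * α₂ < 0) :
    (∀ (i j : ℕ) (t : ℝ), IntegrableOn
      (fun p : ℝ × ℝ =>
        p.1 ^ i * p.2 ^ j * Real.exp (((i : ℝ) + (j : ℝ)) * α * t)
          / ((p.1 + p.2) * Real.exp (α * t))
          * Real.exp (α₁ / α * (p.1 + p.2) * Real.exp (α * t)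
              + α₂ / (2 * α) * (p.1 ^ 2 + p.2 ^ 2) * Real.exp (2 * α * t)))
      ((Set.Ioi (0 : ℝ)) ×ˢ (Set.Ioi (0 : ℝ)))) ∧
    (∀ (i : ℕ) (t : ℝ), IntegrableOn
      (fun x : ℝ => x ^ i * Real.exp ((i : ℝ) * α * t) *
        Real.exp (α₁ / α * x * Real.exp (α * t)
          + α₂ / (2 * α) * x ^ 2 * Real.exp (2 * α * t)))
      (Set.Ioi (0 : ℝ))) ∧
    (∀ (i j : ℕ) (t : ℝ), HasDerivAt (fun u => cauchyBimoment α α₁ α₂ i j u)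
      (α * ((i : ℝ) + (j : ℝ) - 1) * cauchyBimoment α α₁ α₂ i j t
        + α₁ * (cauchyBimoment α α₁ α₂ (i + 1) j t + cauchyBimoment α α₁ α₂ i (j + 1) t)
        + α₂ * (cauchyBimoment α α₁ α₂ (i + 2) j t + cauchyBimoment α α₁ α₂ i (j + 2) t)) t) ∧
    (∀ (i : ℕ) (t : ℝ), HasDerivAt (fun u => cauchySingleMoment α α₁ α₂ i u)
      ((i : ℝ) * α * cauchySingleMoment α α₁ α₂ i t
        + α₁ * cauchySingleMoment α α₁ α₂ (i + 1) t
        + α₂ * cauchySingleMoment α α₁ α₂ (i + 2) t) t) ∧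
    (∀ (i j : ℕ) (t : ℝ), HasDerivAt (fun u => cauchyBimoment α α₁ α₂ i j u)
      (-2 * α * cauchyBimoment α α₁ α₂ i j t) t) ∧
    (∀ (i : ℕ) (t : ℝ), HasDerivAt (fun u => cauchySingleMoment α α₁ α₂ i u)
      (-α * cauchySingleMoment α α₁ α₂ i t) t) := by
  refine ⟨fun i j t => ?_, integrableOn_singleMomentIntegrand hαα₂, hasDerivAt_cauchyBimoment hαα₂,
    hasDerivAt_cauchySingleMoment hαα₂, hasDerivAt_cauchyBimoment_neg_two_mul,
    hasDerivAt_cauchySingleMoment_neg_mul⟩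
  rw [cauchyBimoment_integrand_eq]
  exact integrableOn_bimomentIntegrand hαα₂ i j t

/-- The deformed Cauchy (bi)moments converge, are differentiable, and simultaneously satisfy
the nonisospectral evolutions and the stationarity relations. -/
theorem cauchyMoments_evolution (α α₁ α₂ : ℝ) (hα : α ≠ 0) (hαα₂ : α * α₂ < 0) :
    (∀ (i j : ℕ) (t : ℝ), IntegrableOn
      (fun p : ℝ × ℝ =>
        p.1 ^ i * p.2 ^ j * Real.exp (((i : ℝ) + (j : ℝ)) * α * t)
          / ((p.1 + p.2) * Real.exp (α * t))
          * Real.exp (α₁ / α * (p.1 + p.2) * Real.exp (α * t)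
              + α₂ / (2 * α) * (p.1 ^ 2 + p.2 ^ 2) * Real.exp (2 * α * t)))
      ((Set.Ioi (0 : ℝ)) ×ˢ (Set.Ioi (0 : ℝ)))) ∧
    (∀ (i : ℕ) (t : ℝ), IntegrableOn
      (fun x : ℝ => x ^ i * Real.exp ((i : ℝ) * α * t) *
        Real.exp (α₁ / α * x * Real.exp (α * t)
          + α₂ / (2 * α) * x ^ 2 * Real.exp (2 * α * t)))
      (Set.Ioi (0 : ℝ))) ∧
    (∀ (i j : ℕ) (t : ℝ), HasDerivAt (fun u => cauchyBimoment α α₁ α₂ i j u)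
      (α * ((i : ℝ) + (j : ℝ) - 1) * cauchyBimoment α α₁ α₂ i j t
        + α₁ * (cauchyBimoment α α₁ α₂ (i + 1) j t + cauchyBimoment α α₁ α₂ i (j + 1) t)
        + α₂ * (cauchyBimoment α α₁ α₂ (i + 2) j t + cauchyBimoment α α₁ α₂ i (j + 2) t)) t) ∧
    (∀ (i : ℕ) (t : ℝ), HasDerivAt (fun u => cauchySingleMoment α α₁ α₂ i u)
      ((i : ℝ) * α * cauchySingleMoment α α₁ α₂ i t
        + α₁ * cauchySingleMoment α α₁ α₂ (i + 1) t
        + α₂ * cauchySingleMoment α α₁ α₂ (i + 2) t) t) ∧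
    (∀ (i j : ℕ) (t : ℝ), HasDerivAt (fun u => cauchyBimoment α α₁ α₂ i j u)
      (-2 * α * cauchyBimoment α α₁ α₂ i j t) t) ∧
    (∀ (i : ℕ) (t : ℝ), HasDerivAt (fun u => cauchySingleMoment α α₁ α₂ i u)
      (-α * cauchySingleMoment α α₁ α₂ i t) t) :=
  cauchyMoments_evolution_general α α₁ α₂ hαα₂
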